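/- arXiv:1412.6736 — 5 statements merged into one kernel-verified Lean document; each statement's English description precedes it below -/
import Mathlib

section
/- For integers x > 5 and y > x, if C(x,6) + C(x+1,6) = C(y+1,6), then setting u = (x-2)^2 and v = (y-1)(y-2), one has 2u^3 - 10u^2 + 8u = v^3 - 8v^2 + 12v. -/
lemma choose6_cast (n : ℕ) (hn : 5 ≤ n) :
    ((Nat.choose n 6 : ℤ)) * 720 =
      (n : ℤ) * (n - 1) * (n - 2) * (n - 3) * (n - 4) * (n - 5) := by
  have h := Nat.descFactorial_eq_factorial_mul_choose n 6
  have h2 : (n.descFactorial 6 : ℤ) = 720 * (Nat.choose n 6 : ℤ) := by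
    exact_mod_cast congrArg (Nat.cast : ℕ → ℤ) h
  have h3 : n.descFactorial 6 = n * (n-1) * (n-2) * (n-3) * (n-4) * (n-5) := by
    simp [Nat.descFactorial]; ring
  rw [h3] at h2
  push_cast [Nat.cast_sub (by omega : 1 ≤ n), Nat.cast_sub (by omega : 2 ≤ n),
    Nat.cast_sub (by omega : 3 ≤ n), Nat.cast_sub (by omega : 4 ≤ n),
    Nat.cast_sub (by omega : 5 ≤ n)] at h2
  linarith

theorem stmt_3 (x y : ℕ) (hx : 5 < x) (hy : x < y)
    (h : Nat.choose x 6 + Nat.choose (x + 1) 6 = Nat.choose (y + 1) 6)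
    (u v : ℤ) (hu : u = ((x : ℤ) - 2) ^ 2) (hv : v = ((y : ℤ) - 1) * ((y : ℤ) - 2)) :
    2 * u ^ 3 - 10 * u ^ 2 + 8 * u = v ^ 3 - 8 * v ^ 2 + 12 * v := by
  have h1 := choose6_cast x (by omega)
  have h2 := choose6_cast (x + 1) (by omega)
  have h3 := choose6_cast (y + 1) (by omega)
  have hc : ((Nat.choose x 6 : ℤ) + Nat.choose (x + 1) 6) = Nat.choose (y + 1) 6 := by
    exact_mod_cast congrArg (Nat.cast : ℕ → ℤ) h
  have key : (x : ℤ) * (x - 1) * (x - 2) * (x - 3) * (x - 4) * (x - 5)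
      + ((x : ℤ) + 1) * (x + 1 - 1) * (x + 1 - 2) * (x + 1 - 3) * (x + 1 - 4) * (x + 1 - 5)
      = ((y : ℤ) + 1) * (y + 1 - 1) * (y + 1 - 2) * (y + 1 - 3) * (y + 1 - 4) * (y + 1 - 5) := by
    push_cast at h1 h2 h3 ⊢
    nlinarith [h1, h2, h3, hc]
  subst hu hv
  linear_combination key
end

section
/- If real numbers u, v ≥ 30 satisfy 2u^3 - 10u^2 + 8u = v^3 - 8v^2 + 12v, then 6u^2 - 20u + 8 > 3v^2. -/
theorem stmt_6 (u v : ℝ) (hu : 30 ≤ u) (hv : 30 ≤ v)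
    (h : 2 * u ^ 3 - 10 * u ^ 2 + 8 * u = v ^ 3 - 8 * v ^ 2 + 12 * v) :
    6 * u ^ 2 - 20 * u + 8 > 3 * v ^ 2 := by
  nlinarith [sq_nonneg (u-v), sq_nonneg (u+v), sq_nonneg u, sq_nonneg v, sq_nonneg (2*u-v), sq_nonneg (3*u-2*v), mul_pos (by linarith : (0:ℝ)<u) (by linarith : (0:ℝ)<v), sq_nonneg (u*v), sq_nonneg (u-30), sq_nonneg (v-30)]
end

section
/- If integers u, v satisfy 2u^3 - 10u^2 + 8u = v^3 - 8v^2 + 12v and 2u ≠ 3v, then setting X = (-4u - 17v + 58)/(2u - 3v) and Y = (-146u^2 - 5v^2 + 686u - 188v)/(2u - 3v)^2, the pair (X,Y) satisfies Y^2 = X^3 - X^2 - 30X + 81. -/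
theorem stmt_10 (u v : ℚ)
    (h : 2 * u ^ 3 - 10 * u ^ 2 + 8 * u = v ^ 3 - 8 * v ^ 2 + 12 * v)
    (hne : 2 * u ≠ 3 * v) :
    let X : ℚ := (-4 * u - 17 * v + 58) / (2 * u - 3 * v)
    let Y : ℚ := (-146 * u ^ 2 - 5 * v ^ 2 + 686 * u - 188 * v) / (2 * u - 3 * v) ^ 2
    Y ^ 2 = X ^ 3 - X ^ 2 - 30 * X + 81 := by
  intro X Y
  have hd : 2 * u - 3 * v ≠ 0 := sub_ne_zero.mpr hne
  show Y ^ 2 = X ^ 3 - X ^ 2 - 30 * X + 81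
  simp only [X, Y]
  field_simp
  have hd' : u * 2 - v * 3 ≠ 0 := by intro h0; apply hd; linear_combination h0
  rw [div_add' _ _ _ (pow_ne_zero 3 hd'), div_eq_div_iff (pow_ne_zero 4 hd') (pow_ne_zero 3 hd')]
  refine mul_right_cancel₀ (pow_ne_zero 3 hd') ?_

  linear_combination (616064*u^7 - 5230720*u^6*v - 3121792*u^6 + 17967456*u^5*v^2 + 28096128*u^5*v - 30991680*u^4*v^3 - 105360480*u^4*v^2 + 25597080*u^3*v^4 + 210720960*u^3*v^3 - 4235976*u^2*v^5 - 237061080*u^2*v^4 - 7282710*u*v^6 + 142236648*u*v^5 + 3575016*v^7 - 35559162*v^6) * h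
end

section
/- With α the real cube root of 2 and β = (8 - 5α)/3, the line v = αu + β is the asymptote of the curve 2u^3 - 10u^2 + 8u = v^3 - 8v^2 + 12v; that is, for the real function v(u) defined by the curve for large u, v(u) - (αu + β) tends to 0 as u tends to infinity. -/
open Filter

private lemma quad_tendsto (c B C : ℝ) (hc : 0 < c) :
    Tendsto (fun u : ℝ => c * u ^ 2 + B * u + C) atTop atTop := by
  have h1 : Tendsto (fun u : ℝ => c * u + B) atTop atTop :=
    tendsto_atTop_add_const_right _ B (tendsto_id.const_mul_atTop hc)
  have h2 : Tendsto (fun u : ℝ => u * (c * u + B)) atTop atTop :=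
    tendsto_id.atTop_mul_atTop₀ h1
  have h3 : Tendsto (fun u : ℝ => u * (c * u + B) + C) atTop atTop :=
    tendsto_atTop_add_const_right _ C h2
  refine h3.congr (fun u => by ring)

private lemma fcube_mono (x y : ℝ) (hx : 6 ≤ x) (hxy : x ≤ y) :
    x ^ 3 - 8 * x ^ 2 + 12 * x ≤ y ^ 3 - 8 * y ^ 2 + 12 * y := by
  nlinarith [mul_nonneg (mul_nonneg (sub_nonneg.2 hxy) (by linarith : (0:ℝ) ≤ x - 6))
      (by linarith : (0:ℝ) ≤ y - 6), sq_nonneg (x - y), sq_nonneg (x + y),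
      mul_nonneg (sub_nonneg.2 hxy) (sq_nonneg (y - x))]

theorem stmt_12 (v : ℝ → ℝ)
    (hcurve : ∀ᶠ u in Filter.atTop,
      2 * u ^ 3 - 10 * u ^ 2 + 8 * u = (v u) ^ 3 - 8 * (v u) ^ 2 + 12 * (v u))
    (hbig : Filter.Tendsto v Filter.atTop Filter.atTop) :
    let α : ℝ := (2 : ℝ) ^ ((1 : ℝ) / 3)
    let β : ℝ := (8 - 5 * α) / 3
    Filter.Tendsto (fun u => v u - (α * u + β)) Filter.atTop (nhds 0) := by
  show Tendsto (fun u => v u -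
      ((2:ℝ) ^ ((1:ℝ)/3) * u + (8 - 5 * (2:ℝ) ^ ((1:ℝ)/3)) / 3)) atTop (nhds 0)
  set a : ℝ := (2:ℝ) ^ ((1:ℝ)/3) with ha
  have hapos : 0 < a := Real.rpow_pos_of_pos (by norm_num) _
  have ha3 : a ^ 3 = 2 := by
    rw [ha, ← Real.rpow_natCast ((2:ℝ) ^ ((1:ℝ)/3)) 3,
      ← Real.rpow_mul (by norm_num : (0:ℝ) ≤ 2)]
    norm_num
  rw [NormedAddCommGroup.tendsto_nhds_zero]
  intro ε hε
  -- eventual facts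
  have h2 : ∀ᶠ u in atTop, (6:ℝ) ≤ v u := hbig.eventually_ge_atTop 6
  have hlin : Tendsto (fun u : ℝ => a * u + (8 - 5 * a) / 3) atTop atTop :=
    tendsto_atTop_add_const_right _ _ (tendsto_id.const_mul_atTop hapos)
  have h3 : ∀ᶠ u in atTop, 6 + ε ≤ a * u + (8 - 5 * a) / 3 :=
    hlin.eventually_ge_atTop (6 + ε)
  have hc : 0 < 3 * a ^ 2 * ε := by positivity
  -- upper bound polynomial
  have heqp : ∀ u : ℝ,
      ((a * u + (8 - 5 * a) / 3 + ε) ^ 3 - 8 * (a * u + (8 - 5 * a) / 3 + ε) ^ 2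
        + 12 * (a * u + (8 - 5 * a) / 3 + ε)) - (2 * u ^ 3 - 10 * u ^ 2 + 8 * u)
      = (3 * a ^ 2 * ε) * u ^ 2
        + ((26 - 28 * a) / 3 - 10 * a ^ 2 * ε + 3 * a * ε ^ 2) * u
        + ((420 * a - 410) / 27 + (25 * a ^ 2 - 28) / 3 * ε - 5 * a * ε ^ 2 + ε ^ 3) := by
    intro u
    linear_combination ((u - 5/3) ^ 3) * ha3
  have h4 : ∀ᶠ u in atTop, 0 <
      ((a * u + (8 - 5 * a) / 3 + ε) ^ 3 - 8 * (a * u + (8 - 5 * a) / 3 + ε) ^ 2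
        + 12 * (a * u + (8 - 5 * a) / 3 + ε)) - (2 * u ^ 3 - 10 * u ^ 2 + 8 * u) := by
    have := (quad_tendsto (3 * a ^ 2 * ε)
      ((26 - 28 * a) / 3 - 10 * a ^ 2 * ε + 3 * a * ε ^ 2)
      ((420 * a - 410) / 27 + (25 * a ^ 2 - 28) / 3 * ε - 5 * a * ε ^ 2 + ε ^ 3)
      hc).eventually_gt_atTop 0
    filter_upwards [this] with u hu
    rw [heqp u]; exact hu
  -- lower bound polynomial
  have heqm : ∀ u : ℝ,
      (2 * u ^ 3 - 10 * u ^ 2 + 8 * u) -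
      ((a * u + (8 - 5 * a) / 3 - ε) ^ 3 - 8 * (a * u + (8 - 5 * a) / 3 - ε) ^ 2
        + 12 * (a * u + (8 - 5 * a) / 3 - ε))
      = (3 * a ^ 2 * ε) * u ^ 2
        + (-((26 - 28 * a) / 3) - 10 * a ^ 2 * ε - 3 * a * ε ^ 2) * u
        + (-((420 * a - 410) / 27) + (25 * a ^ 2 - 28) / 3 * ε + 5 * a * ε ^ 2 + ε ^ 3) := by
    intro u
    linear_combination (-((u - 5/3) ^ 3)) * ha3
  have h5 : ∀ᶠ u in atTop, 0 <
      (2 * u ^ 3 - 10 * u ^ 2 + 8 * u) -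
      ((a * u + (8 - 5 * a) / 3 - ε) ^ 3 - 8 * (a * u + (8 - 5 * a) / 3 - ε) ^ 2
        + 12 * (a * u + (8 - 5 * a) / 3 - ε)) := by
    have := (quad_tendsto (3 * a ^ 2 * ε)
      (-((26 - 28 * a) / 3) - 10 * a ^ 2 * ε - 3 * a * ε ^ 2)
      (-((420 * a - 410) / 27) + (25 * a ^ 2 - 28) / 3 * ε + 5 * a * ε ^ 2 + ε ^ 3)
      hc).eventually_gt_atTop 0
    filter_upwards [this] with u hu
    rw [heqm u]; exact hu
  filter_upwards [hcurve, h2, h3, h4, h5] with u hcu h6 hl hp hm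
  set L : ℝ := a * u + (8 - 5 * a) / 3 with hL
  have hupper : v u < L + ε := by
    by_contra hcon
    push_neg at hcon
    have hx6 : (6:ℝ) ≤ L + ε := by linarith
    have := fcube_mono (L + ε) (v u) hx6 hcon
    rw [← hcu] at this
    linarith
  have hlower : L - ε < v u := by
    by_contra hcon
    push_neg at hcon
    have := fcube_mono (v u) (L - ε) h6 hcon
    rw [← hcu] at this
    linarith
  rw [Real.norm_eq_abs, abs_lt]
  constructor <;> linarith
end

section
/- For every integer v ≥ 30 and the corresponding point P with integral coordinates (u,v) on the curve 2u^3 - 10u^2 + 8u = v^3 - 8v^2 + 12v mapped to E: Y^2 = X^3 - X^2 - 30X + 81, the naive Weil height satisfies h(P) ≤ log(4u + 17v - 58). -/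
/-- The naive (logarithmic) Weil height of a rational point on the curve, computed from
its `X`-coordinate: `log (max |X.num| (X.den))`. -/
noncomputable def naiveHeight (X : ℚ) : ℝ :=
  Real.log (max (|X.num| : ℝ) (X.den : ℝ))

theorem stmt_19 (u v : ℤ) (hv : 30 ≤ v)
    (h : 2 * u ^ 3 - 10 * u ^ 2 + 8 * u = v ^ 3 - 8 * v ^ 2 + 12 * v)
    (hne : 2 * u ≠ 3 * v) :
    naiveHeight ((-4 * (u : ℚ) - 17 * (v : ℚ) + 58) / (2 * (u : ℚ) - 3 * (v : ℚ))) ≤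
      Real.log (4 * (u : ℝ) + 17 * (v : ℝ) - 58) := by
  have hX : ((-4 * (u : ℚ) - 17 * (v : ℚ) + 58) / (2 * (u : ℚ) - 3 * (v : ℚ)))
      = Rat.divInt (-4 * u - 17 * v + 58) (2 * u - 3 * v) := by
    rw [Rat.divInt_eq_div]
    push_cast
    ring
  set a : ℤ := -4 * u - 17 * v + 58 with ha
  set b : ℤ := 2 * u - 3 * v with hb
  have hbne : b ≠ 0 := by
    intro h0
    apply hne
    omega
  have hu : 1 ≤ u := by
    by_contra hu'
    push_neg at hu'
    nlinarith [sq_nonneg u, sq_nonneg v, sq_nonneg (u*v)]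
  rw [hX]
  unfold naiveHeight
  by_cases hA : a = 0
  · have h4 : (4 : ℝ) * (u : ℝ) + 17 * (v : ℝ) - 58 = 0 := by
      have : (4 : ℤ) * u + 17 * v - 58 = 0 := by omega
      have := congrArg (fun z : ℤ => (z : ℝ)) this
      push_cast at this
      linarith
    rw [h4, Real.log_zero, hA]
    simp [Rat.zero_divInt]
  · have hApos : 0 < -a := by
      have : 0 < 4 * u + 17 * v - 58 := by nlinarith
      -- -a = 4u+17v-58
      omega
    have hnum : |(Rat.divInt a b).num| ≤ -a := by
      have hd : (Rat.divInt a b).num ∣ a := Rat.num_dvd a hbne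
      have h1 := Int.le_of_dvd (abs_pos.mpr hA) ((abs_dvd_abs _ _).mpr hd)
      have habs : |a| = -a := abs_of_nonpos (by omega)
      rw [habs] at h1
      exact h1
    have hden : ((Rat.divInt a b).den : ℤ) ≤ -a := by
      have hd : ((Rat.divInt a b).den : ℤ) ∣ b := Rat.den_dvd a b
      have h1 : ((Rat.divInt a b).den : ℤ) ≤ |b| :=
        Int.le_of_dvd (abs_pos.mpr hbne) ((dvd_abs _ _).mpr hd)
      have h2 : |b| ≤ -a := by
        rcases abs_cases b with ⟨h3, _⟩ | ⟨h3, _⟩ <;> omega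
      exact le_trans h1 h2
    have hAr : (4 : ℝ) * (u : ℝ) + 17 * (v : ℝ) - 58 = ((-a : ℤ) : ℝ) := by
      push_cast [ha]; ring
    rw [hAr]
    apply Real.log_le_log
    · have : (1 : ℝ) ≤ ((Rat.divInt a b).den : ℝ) := by
        exact_mod_cast (Rat.divInt a b).pos
      positivity
    · apply max_le
      · exact_mod_cast (by exact_mod_cast hnum : (|(Rat.divInt a b).num| : ℝ) ≤ ((-a : ℤ) : ℝ))
      · exact_mod_cast hden
end
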